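/- Let D be a commutative fuzzy disjunction, N a fuzzy negation, and suppose the natural negation N_D of D is a fuzzy negation. Let I(x,y) = D(N(x),y). Then I satisfies the ordering property (I(x,y) = 1 ⟺ x ≤ y, for all x,y ∈ [0,1]) if and only if: D(N(x),x) = 1 for all x, N = N_D, and N_D is a strong fuzzy negation (N_D(N_D(x)) = x for all x). -/
import Mathlib


open Set

def unitI : Set ℝ := Set.Icc 0 1

/-- A fuzzy conjunction on [0,1]. -/
def IsFuzzyConj (C : ℝ → ℝ → ℝ) : Prop :=
  (∀ x ∈ unitI, ∀ y ∈ unitI, C x y ∈ unitI) ∧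
  (∀ y ∈ unitI, ∀ x₁ ∈ unitI, ∀ x₂ ∈ unitI, x₁ ≤ x₂ → C x₁ y ≤ C x₂ y) ∧
  (∀ x ∈ unitI, ∀ y₁ ∈ unitI, ∀ y₂ ∈ unitI, y₁ ≤ y₂ → C x y₁ ≤ C x y₂) ∧
  C 1 1 = 1 ∧ C 0 0 = 0 ∧ C 1 0 = 0 ∧ C 0 1 = 0

/-- A fuzzy disjunction on [0,1]. -/
def IsFuzzyDisj (D : ℝ → ℝ → ℝ) : Prop :=
  (∀ x ∈ unitI, ∀ y ∈ unitI, D x y ∈ unitI) ∧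
  (∀ y ∈ unitI, ∀ x₁ ∈ unitI, ∀ x₂ ∈ unitI, x₁ ≤ x₂ → D x₁ y ≤ D x₂ y) ∧
  (∀ x ∈ unitI, ∀ y₁ ∈ unitI, ∀ y₂ ∈ unitI, y₁ ≤ y₂ → D x y₁ ≤ D x y₂) ∧
  D 0 0 = 0 ∧ D 1 1 = 1 ∧ D 1 0 = 1 ∧ D 0 1 = 1

/-- A fuzzy negation on [0,1]. -/
def IsFuzzyNeg (N : ℝ → ℝ) : Prop :=
  (∀ x ∈ unitI, N x ∈ unitI) ∧ N 0 = 1 ∧ N 1 = 0 ∧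
  (∀ x ∈ unitI, ∀ y ∈ unitI, x ≤ y → N y ≤ N x)

/-- A fuzzy implication on [0,1]. -/
def IsFuzzyImpl (I : ℝ → ℝ → ℝ) : Prop :=
  (∀ x ∈ unitI, ∀ y ∈ unitI, I x y ∈ unitI) ∧
  (∀ y ∈ unitI, ∀ x₁ ∈ unitI, ∀ x₂ ∈ unitI, x₁ ≤ x₂ → I x₂ y ≤ I x₁ y) ∧
  (∀ x ∈ unitI, ∀ y₁ ∈ unitI, ∀ y₂ ∈ unitI, y₁ ≤ y₂ → I x y₁ ≤ I x y₂) ∧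
  I 0 0 = 1 ∧ I 1 1 = 1 ∧ I 1 0 = 0

/-- The natural negation of a fuzzy conjunction. -/
noncomputable def natNegC (C : ℝ → ℝ → ℝ) (x : ℝ) : ℝ :=
  sSup {t | t ∈ unitI ∧ C x t = 0}

/-- The natural negation of a fuzzy disjunction. -/
noncomputable def natNegD (D : ℝ → ℝ → ℝ) (x : ℝ) : ℝ :=
  sInf {t | t ∈ unitI ∧ D x t = 1}

lemma mem0unit : (0:ℝ) ∈ unitI := ⟨le_refl 0, zero_le_one⟩
lemma mem1unit : (1:ℝ) ∈ unitI := ⟨zero_le_one, le_refl 1⟩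

theorem stmt_15 (D : ℝ → ℝ → ℝ) (N : ℝ → ℝ)
    (hD : IsFuzzyDisj D)
    (hcomm : ∀ x ∈ unitI, ∀ y ∈ unitI, D x y = D y x)
    (hN : IsFuzzyNeg N) (hND : IsFuzzyNeg (natNegD D)) :
    (∀ x ∈ unitI, ∀ y ∈ unitI, (D (N x) y = 1 ↔ x ≤ y)) ↔
      ((∀ x ∈ unitI, D (N x) x = 1) ∧ Set.EqOn N (natNegD D) unitI ∧
        ∀ x ∈ unitI, natNegD D (natNegD D x) = x) := by
  obtain ⟨hDr, hDm1, hDm2, _, _, _, hD01⟩ := hD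
  obtain ⟨hNr, _, _, hNa⟩ := hN
  obtain ⟨hNDr, _, _, hNDa⟩ := hND
  have hDx1 : ∀ x ∈ unitI, D x 1 = 1 := fun x hx =>
    le_antisymm (hDr x hx 1 mem1unit).2
      (by calc (1:ℝ) = D 0 1 := hD01.symm
            _ ≤ D x 1 := hDm1 1 mem1unit 0 mem0unit x hx hx.1)
  have hSne : ∀ x ∈ unitI, (1:ℝ) ∈ {t | t ∈ unitI ∧ D x t = 1} := fun x hx =>
    ⟨mem1unit, hDx1 x hx⟩
  have hSbdd : ∀ x : ℝ, BddBelow {t | t ∈ unitI ∧ D x t = 1} := fun x =>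
    ⟨0, fun t ht => ht.1.1⟩
  -- N_D z ≤ N z whenever D (N z) z = 1
  constructor
  · intro hOP
    have hLEM : ∀ x ∈ unitI, D (N x) x = 1 := fun x hx => (hOP x hx x hx).2 le_rfl
    have hL3 : ∀ z ∈ unitI, natNegD D z ≤ N z := by
      intro z hz
      exact csInf_le (hSbdd z) ⟨hNr z hz,
        by rw [hcomm z hz (N z) (hNr z hz)]; exact hLEM z hz⟩
    have hL2 : ∀ x ∈ unitI, natNegD D (N x) = x := by
      intro x hx
      have hset : {t | t ∈ unitI ∧ D (N x) t = 1} = Set.Icc x 1 := by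
        ext t
        simp only [Set.mem_setOf_eq, Set.mem_Icc]
        constructor
        · rintro ⟨ht, hdt⟩
          exact ⟨(hOP x hx t ht).1 hdt, ht.2⟩
        · rintro ⟨hxt, ht1⟩
          have htI : t ∈ unitI := ⟨le_trans hx.1 hxt, ht1⟩
          exact ⟨htI, (hOP x hx t htI).2 hxt⟩
      rw [natNegD, hset, csInf_Icc hx.2]
    have hMain : ∀ x ∈ unitI, N x ≤ natNegD D x := by
      intro x hx
      apply le_csInf ⟨1, hSne x hx⟩
      rintro t ⟨htI, hDxt⟩
      by_contra hcon
      push_neg at hcon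
      have hNxI : N x ∈ unitI := hNr x hx
      -- natNegD D t = x
      have hNDt_le : natNegD D t ≤ x := csInf_le (hSbdd t)
        ⟨hx, by rw [hcomm t htI x hx]; exact hDxt⟩
      have hNDt_ge : x ≤ natNegD D t := by
        have h := hNDa t htI (N x) hNxI (le_of_lt hcon)
        rwa [hL2 x hx] at h
      have hNDt : natNegD D t = x := le_antisymm hNDt_le hNDt_ge
      set w := (t + N x) / 2 with hwdef
      have hw1 : t < w := by simp only [hwdef]; linarith
      have hw2 : w < N x := by simp only [hwdef]; linarith
      have hwI : w ∈ unitI := ⟨le_trans htI.1 hw1.le, le_trans hw2.le hNxI.2⟩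
      have hNwI : N w ∈ unitI := hNr w hwI
      -- N w ≤ x
      have hNwle : N w ≤ x := by
        by_contra hcon2
        push_neg at hcon2
        have hlt : sInf {s | s ∈ unitI ∧ D t s = 1} < N w := by
          have : natNegD D t < N w := by rw [hNDt]; exact hcon2
          exact this
        obtain ⟨u, hu, hulw⟩ := exists_lt_of_csInf_lt ⟨1, hSne t htI⟩ hlt
        have hDtNw : D t (N w) = 1 := le_antisymm (hDr t htI (N w) hNwI).2
          (by calc (1:ℝ) = D t u := hu.2.symm
            _ ≤ D t (N w) := hDm2 t htI u hu.1 (N w) hNwI hulw.le)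
        have : w ≤ t := (hOP w hwI t htI).1
          (by rw [hcomm (N w) hNwI t htI]; exact hDtNw)
        exact absurd this (not_le.mpr hw1)
      -- x ≤ N w
      have hxNNx : x ≤ N (N x) := by
        have h := hL3 (N x) hNxI
        rwa [hL2 x hx] at h
      have hNwge : x ≤ N w := le_trans hxNNx (hNa w hwI (N x) hNxI hw2.le)
      -- so N w = x and N (N x) = x
      have hNweq : N w = x := le_antisymm hNwle hNwge
      have hNNxeq : N (N x) = x :=
        le_antisymm (hNweq ▸ hNa w hwI (N x) hNxI hw2.le) hxNNx
      -- injectivity: N w = N (N x) → w = N x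
      have : w = N x := by
        have h1 : natNegD D (N w) = w := hL2 w hwI
        have h2 : natNegD D (N (N x)) = N x := hL2 (N x) hNxI
        rw [hNweq, ← hNNxeq] at h1
        rw [h2] at h1
        exact h1.symm
      exact absurd this (ne_of_lt hw2)
    have hEq : Set.EqOn N (natNegD D) unitI := fun x hx =>
      le_antisymm (hMain x hx) (hL3 x hx)
    refine ⟨hLEM, hEq, ?_⟩
    intro x hx
    rw [← hEq hx]
    exact hL2 x hx
  · rintro ⟨hLEM, hEq, hStrong⟩
    intro x hx y hy
    have hNxI : N x ∈ unitI := hNr x hx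
    constructor
    · intro h1
      have hle : natNegD D y ≤ natNegD D x := by
        rw [← hEq hx]
        exact csInf_le (hSbdd y) ⟨hNxI, by rw [hcomm y hy (N x) hNxI]; exact h1⟩
      have h := hNDa (natNegD D y) (hNDr y hy) (natNegD D x) (hNDr x hx) hle
      rwa [hStrong x hx, hStrong y hy] at h
    · intro hxy
      refine le_antisymm (hDr (N x) hNxI y hy).2 ?_
      calc (1:ℝ) = D (N x) x := (hLEM x hx).symm
        _ ≤ D (N x) y := hDm2 (N x) hNxI x hx y hy hxy
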